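/- arXiv:1202.2112 — 2 statements merged into one kernel-verified Lean document; each statement's English description precedes it below -/
import Mathlib

section
/- Suppose at each step i = 1,…,N of a greedy sequence construction, the element is chosen by a classifier π_i whose cost-sensitive regret is r_i, meaning its expected marginal-gain shortfall relative to the best classifier in hypothesis class Π is at most r_i, and the best classifier in Π attains the maximum expected marginal gain. Then the expected value of the constructed length-N sequence satisfies E[f(Ŝ_N)] ≥ (1 − 1/e) max_{S ∈ classifier-sequences of length N} E[f(S)] − Σ_{i=1}^N r_i. -/
/-!
The classical analysis of greedy maximization, with the greedy choice replaced by an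
`r i`-approximate one. If `T` is the current prefix and `C` bounds every one-step
marginal gain at `T`, submodularity and monotonicity give `F S' ≤ F (T ++ S') ≤ F T + N C`
for any `S'` of length at most `N`. With `C` the gain actually realised plus `r i`, this yields
`F S' - F (T ++ [π i]) ≤ (1 - 1/N) (F S' - F T) + r i`; unrolling over `N` steps and using
`(1 - 1/N)^N ≤ 1/e` gives the theorem.
-/

open Finset

theorem List.take_add_one_ofFn {α : Type*} {n : ℕ} (v : Fin n → α) (i : Fin n) :
    (List.ofFn v).take (i + 1) = (List.ofFn v).take i ++ [v i] := by
  rw [List.take_add_one, List.getElem?_ofFn]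
  simp

theorem le_pow_mul_add_sum_of_succ_le {x : ℕ → ℝ} {c : ℝ}
    (hc₀ : 0 ≤ c) (hc₁ : c ≤ 1) :
    ∀ {n : ℕ} {e : Fin n → ℝ}, (∀ i, 0 ≤ e i) →
      (∀ i : Fin n, x (i + 1) ≤ c * x i + e i) → x n ≤ c ^ n * x 0 + ∑ i, e i
  | 0, _, _, _ => by simp
  | n + 1, e, he, hx => by
    have ih : x n ≤ c ^ n * x 0 + ∑ i : Fin n, e i.castSucc :=
      le_pow_mul_add_sum_of_succ_le hc₀ hc₁ (fun i => he _) fun i => hx i.castSucc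
    have hsum : 0 ≤ ∑ i : Fin n, e i.castSucc := sum_nonneg fun i _ => he _
    have hlast := hx (Fin.last n)
    simp only [Fin.val_last] at hlast
    rw [Fin.sum_univ_castSucc, pow_succ]
    linarith [mul_le_mul_of_nonneg_left ih hc₀, mul_le_of_le_one_left hsum hc₁]

section Submodular

variable {α : Type*} (F : List α → ℝ)
  (hmono : ∀ S₁ S₂ : List α, F S₁ ≤ F (S₁ ++ S₂) ∧ F S₂ ≤ F (S₁ ++ S₂))
  (hsub : ∀ (S₁ S₂ : List α) (a : α),
    F (S₁ ++ S₂ ++ [a]) - F (S₁ ++ S₂) ≤ F (S₁ ++ [a]) - F S₁)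
include hsub

theorem sub_le_length_mul_of_forall_marginal_le {T : List α} {C : ℝ}
    (hC : ∀ a, F (T ++ [a]) - F T ≤ C) (S : List α) :
    F (T ++ S) - F T ≤ S.length * C := by
  induction S using List.reverseRecOn with
  | nil => simp
  | append_singleton S a ih =>
    have := hsub T S a
    rw [← List.append_assoc, List.length_append, List.length_singleton, Nat.cast_succ]
    linarith [hC a]

include hmono

theorem sub_append_singleton_le_of_approx_greedy {n : ℕ} (hn : 0 < n) {S : List α}
    (hS : S.length ≤ n) {T : List α} {a : α} {r : ℝ}
    (hr : ∀ b, F (T ++ [b]) - F T - r ≤ F (T ++ [a]) - F T) :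
    F S - F (T ++ [a]) ≤ (1 - 1 / n) * (F S - F T) + r := by
  set C := F (T ++ [a]) - F T + r
  have hC : ∀ b, F (T ++ [b]) - F T ≤ C := fun b => by linarith [hr b]
  have hC₀ : 0 ≤ C := by linarith [hr a, (hmono T [a]).1]
  have hn' : (0 : ℝ) < n := by exact_mod_cast hn
  have hgap : F S - F T ≤ n * C := calc
    F S - F T ≤ F (T ++ S) - F T := by linarith [(hmono T S).2]
    _ ≤ S.length * C := sub_le_length_mul_of_forall_marginal_le F hsub hC S
    _ ≤ n * C := by gcongr
  have hfrac : (F S - F T) / n ≤ C := by rwa [div_le_iff₀ hn', mul_comm]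
  have hsplit : (1 - 1 / (n : ℝ)) * (F S - F T) = (F S - F T) - (F S - F T) / n := by ring
  linarith

end Submodular

theorem stmt10_general {H : Type*}
    (F : List H → ℝ)  -- F S = E_{environments}[f(sequence of actions induced by S)]
    (hmono : ∀ S₁ S₂ : List H, F S₁ ≤ F (S₁ ++ S₂) ∧ F S₂ ≤ F (S₁ ++ S₂))
    (hsub : ∀ (S₁ S₂ : List H) (a : H),
      F (S₁ ++ S₂ ++ [a]) - F (S₁ ++ S₂) ≤ F (S₁ ++ [a]) - F S₁)
    (hempty : F [] = 0)
    (N : ℕ) (hN : 1 ≤ N) (π : Fin N → H) (r : Fin N → ℝ)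
    (hregret : ∀ (i : Fin N) (π' : H),
      F ((List.ofFn π).take i ++ [π']) - F ((List.ofFn π).take i) - r i ≤
        F ((List.ofFn π).take i ++ [π i]) - F ((List.ofFn π).take i))
    (S' : List H) (hS' : S'.length ≤ N) :
    F (List.ofFn π) ≥ (1 - 1 / Real.exp 1) * F S' - ∑ i, r i := by
  have hr (i : Fin N) : 0 ≤ r i := by simpa using hregret i (π i)
  have hc₀ : 0 ≤ 1 - 1 / (N : ℝ) :=
    sub_nonneg.2 <| div_le_one_of_le₀ (by exact_mod_cast hN) N.cast_nonneg
  have hc₁ : 1 - 1 / (N : ℝ) ≤ 1 := by simp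
  have hgap := le_pow_mul_add_sum_of_succ_le (x := fun k => F S' - F ((List.ofFn π).take k))
    hc₀ hc₁ hr fun i => by
      simpa only [List.take_add_one_ofFn] using
        sub_append_singleton_le_of_approx_greedy F hmono hsub hN hS' (hregret i)
  have hexp : (1 - 1 / (N : ℝ)) ^ N ≤ 1 / Real.exp 1 := by
    simpa [Real.exp_neg] using
      Real.one_sub_div_pow_le_exp_neg (n := N) (t := 1) (by exact_mod_cast hN)
  have hOPT : 0 ≤ F S' := hempty ▸ (hmono [] S').1
  simp only [List.take_zero, hempty, sub_zero,
    List.take_of_length_le (List.length_ofFn (f := π)).le] at hgap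
  linarith [mul_le_mul_of_nonneg_right hexp hOPT]

/-- Theorem 1 of the paper: the expected objective `F` over environments
is monotone submodular over sequences of classifiers from the hypothesis class `Π`
(a finite nonempty type). If at each slot `i` the chosen classifier `π i` has
cost-sensitive regret `r i`, i.e. its expected marginal gain falls short of the best
classifier's (which attains the maximum expected marginal gain) by at most `r i`, then
`E[f(Ŝ_N)] ≥ (1 − 1/e) · max over length-N classifier sequences of E[f(S)] − Σ r i`. -/
theorem stmt10 {H : Type*} [Fintype H] [Nonempty H]
    (F : List H → ℝ)  -- F S = E_{environments}[f(sequence of actions induced by S)]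
    (hnonneg : ∀ S, 0 ≤ F S)
    (hmono : ∀ S₁ S₂ : List H, F S₁ ≤ F (S₁ ++ S₂) ∧ F S₂ ≤ F (S₁ ++ S₂))
    (hsub : ∀ (S₁ S₂ : List H) (a : H),
      F (S₁ ++ S₂ ++ [a]) - F (S₁ ++ S₂) ≤ F (S₁ ++ [a]) - F S₁)
    (hempty : F [] = 0)
    (N : ℕ) (hN : 1 ≤ N) (π : Fin N → H) (r : Fin N → ℝ) (hr : ∀ i, 0 ≤ r i)
    (hregret : ∀ (i : Fin N) (π' : H),
      F ((List.ofFn π).take i ++ [π']) - F ((List.ofFn π).take i) - r i ≤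
        F ((List.ofFn π).take i ++ [π i]) - F ((List.ofFn π).take i))
    (S' : List H) (hS' : S'.length ≤ N) :
    F (List.ofFn π) ≥ (1 - 1 / Real.exp 1) * F S' - ∑ i, r i :=
  stmt10_general F hmono hsub hempty N hN π r hregret S' hS'
end

section
/- Combining the greedy-with-error bound and the classification-to-regression reduction: if each slot i of a length-N greedy sequence is filled by a predictor induced from a squared-loss regressor with regression regret r_reg_i over k = |V| actions, then the expected value of the resulting sequence is at least (1 − 1/e) · max_S E[f(S)] − Σ_{i=1}^N √(2(|V|−1) r_reg_i), where the max is over sequences of cost-sensitive classifiers of length N. -/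
/-!
Let `T i` be the prefix of length `i` of the chosen sequence and `S'` any sequence of length at
most `N`. Submodularity bounds `F S' - F (T i)` by the sum of the marginal gains at `T i` of the
`≤ N` elements of `S'`, each of which is at most the gain of the chosen `π i` plus its regret `εᵢ`.
Hence the gap `F S' - F (T i)` shrinks by a factor `1 - 1/N` per slot up to an additive `εᵢ`,
and after `N` slots `(1 - 1/N)^N ≤ 1/e` gives the bound.
-/

open Finset

section Submodular

variable {H : Type*} (F : List H → ℝ)

def marginalGain (S : List H) (b : H) : ℝ := F (S ++ [b]) - F S

variable {F}

theorem sub_le_sum_marginalGain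
    (hsub : ∀ (S₁ S₂ : List H) (a : H),
      F (S₁ ++ S₂ ++ [a]) - F (S₁ ++ S₂) ≤ F (S₁ ++ [a]) - F S₁)
    (S T : List H) : F (S ++ T) - F S ≤ (T.map (marginalGain F S)).sum := by
  induction T generalizing S with
  | nil => simp
  | cons a T ih =>
    have hgains : (T.map (marginalGain F (S ++ [a]))).sum ≤ (T.map (marginalGain F S)).sum :=
      List.sum_le_sum fun b _ => hsub S [a] b
    have hstep := ih (S ++ [a])
    simp only [List.append_assoc, List.singleton_append] at hstep hgains
    simp only [List.map_cons, List.sum_cons, marginalGain]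
    linarith

theorem sub_append_le_of_approx_greedy
    (hmono : ∀ S₁ S₂ : List H, F S₁ ≤ F (S₁ ++ S₂) ∧ F S₂ ≤ F (S₁ ++ S₂))
    (hsub : ∀ (S₁ S₂ : List H) (a : H),
      F (S₁ ++ S₂ ++ [a]) - F (S₁ ++ S₂) ≤ F (S₁ ++ [a]) - F S₁)
    {S S' : List H} {a : H} {ε : ℝ} {n : ℕ} (hn : 0 < n) (hS' : S'.length ≤ n) (hε : 0 ≤ ε)
    (hgreedy : ∀ b, marginalGain F S b ≤ marginalGain F S a + ε) :
    F S' - F (S ++ [a]) ≤ (1 - 1 / n) * (F S' - F S) + ε := by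
  have hn' : (0 : ℝ) < n := by exact_mod_cast hn
  have hgain : 0 ≤ marginalGain F S a + ε := add_nonneg (sub_nonneg.mpr (hmono S [a]).1) hε
  have hgap : F S' - F S ≤ n * (marginalGain F S a + ε) :=
    calc F S' - F S ≤ F (S ++ S') - F S := by linarith [(hmono S S').2]
      _ ≤ (S'.map (marginalGain F S)).sum := sub_le_sum_marginalGain hsub S S'
      _ ≤ (S'.map (marginalGain F S)).length • (marginalGain F S a + ε) :=
        List.sum_le_card_nsmul _ _ (List.forall_mem_map.mpr fun b _ ↦ hgreedy b)
      _ ≤ n * (marginalGain F S a + ε) := by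
        rw [List.length_map, nsmul_eq_mul]; gcongr
  have hgap' : (F S' - F S) / n ≤ marginalGain F S a + ε := by
    rwa [div_le_iff₀' hn']
  have hsplit : (1 - 1 / n) * (F S' - F S) = (F S' - F S) - (F S' - F S) / n := by ring
  rw [hsplit]
  unfold marginalGain at hgap'
  linarith

end Submodular

theorem le_pow_mul_add_sum_of_le_mul_add {q : ℝ} (hq₀ : 0 ≤ q) (hq₁ : q ≤ 1) :
    ∀ {n : ℕ} (x : ℕ → ℝ) (e : Fin n → ℝ), (∀ i, 0 ≤ e i) →
      (∀ i : Fin n, x (i + 1) ≤ q * x i + e i) → x n ≤ q ^ n * x 0 + ∑ i, e i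
  | 0, x, _, _, _ => by simp
  | n + 1, x, e, he, hx => by
    have ih := le_pow_mul_add_sum_of_le_mul_add hq₀ hq₁ x (fun i ↦ e i.castSucc)
      (fun i ↦ he _) (fun i ↦ hx i.castSucc)
    have hsum : 0 ≤ ∑ i : Fin n, e i.castSucc := sum_nonneg fun i _ ↦ he _
    have hlast := hx (Fin.last n)
    simp only [Fin.val_last] at hlast
    rw [Fin.sum_univ_castSucc, pow_succ']
    nlinarith

theorem one_sub_inv_pow_le_inv_exp_one {n : ℕ} (hn : 1 ≤ n) :
    (1 - 1 / (n : ℝ)) ^ n ≤ 1 / Real.exp 1 := by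
  simpa [Real.exp_neg] using Real.one_sub_div_pow_le_exp_neg (t := 1) (by exact_mod_cast hn)

theorem stmt14_general {V : Type*} [Fintype V] {H : Type*}
    (F : List H → ℝ)  -- F S = E_{environments}[f(induced action sequence of S)]
    (hnonneg : ∀ S, 0 ≤ F S)
    (hmono : ∀ S₁ S₂ : List H, F S₁ ≤ F (S₁ ++ S₂) ∧ F S₂ ≤ F (S₁ ++ S₂))
    (hsub : ∀ (S₁ S₂ : List H) (a : H),
      F (S₁ ++ S₂ ++ [a]) - F (S₁ ++ S₂) ≤ F (S₁ ++ [a]) - F S₁)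
    (N : ℕ) (hN : 1 ≤ N) (π : Fin N → H) (rreg : Fin N → ℝ)
    -- slot `i` is filled with cost-sensitive regret at most `√(2(|V|−1) rreg i)`:
    (hregret : ∀ (i : Fin N) (π' : H),
      F ((List.ofFn π).take i ++ [π']) - F ((List.ofFn π).take i) -
          Real.sqrt (2 * ((Fintype.card V : ℝ) - 1) * rreg i) ≤
        F ((List.ofFn π).take i ++ [π i]) - F ((List.ofFn π).take i))
    (S' : List H) (hS' : S'.length ≤ N) :
    F (List.ofFn π) ≥ (1 - 1 / Real.exp 1) * F S' -
      ∑ i, Real.sqrt (2 * ((Fintype.card V : ℝ) - 1) * rreg i) := by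
  set ε : Fin N → ℝ := fun i ↦ Real.sqrt (2 * ((Fintype.card V : ℝ) - 1) * rreg i)
  set T : ℕ → List H := fun n ↦ (List.ofFn π).take n
  have hstep (i : Fin N) : F S' - F (T (i + 1)) ≤ (1 - 1 / N) * (F S' - F (T i)) + ε i := by
    have hT : T (i + 1) = T i ++ [π i] := by simp [T, List.take_add_one]
    rw [hT]
    refine sub_append_le_of_approx_greedy hmono hsub (by omega) hS' (Real.sqrt_nonneg _) ?_
    intro b
    simpa only [marginalGain, sub_le_iff_le_add] using hregret i b
  have hq₀ : 0 ≤ 1 - 1 / (N : ℝ) := by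
    rw [sub_nonneg, div_le_one₀ (by positivity)]; exact_mod_cast hN
  have hgap := le_pow_mul_add_sum_of_le_mul_add hq₀ (by simp) (fun n ↦ F S' - F (T n)) ε
    (fun _ ↦ Real.sqrt_nonneg _) hstep
  have hTN : T N = List.ofFn π := List.take_of_length_le (by simp)
  have hpow : (1 - 1 / (N : ℝ)) ^ N * (F S' - F (T 0)) ≤ 1 / Real.exp 1 * F S' :=
    calc (1 - 1 / (N : ℝ)) ^ N * (F S' - F (T 0)) ≤ (1 - 1 / (N : ℝ)) ^ N * F S' :=
          mul_le_mul_of_nonneg_left (by linarith [hnonneg (T 0)]) (pow_nonneg hq₀ N)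
      _ ≤ 1 / Real.exp 1 * F S' :=
          mul_le_mul_of_nonneg_right (one_sub_inv_pow_le_inv_exp_one hN) (hnonneg S')
  simp only [hTN] at hgap
  linarith

/-- Theorem 2 of the paper: combining the approximate-greedy bound with
the classification-to-regression reduction.  `F` is the expected (over environments)
monotone submodular objective on sequences of classifiers from hypothesis class `H`
over a finite action set `V`.  If the predictor at each slot `i` is induced from a
squared-loss regressor with regression regret `rreg i` (hence marginal-gain shortfall
at most `√(2(|V|−1) rreg i)`), then the expected value of the resulting sequence is at
least `(1 − 1/e) · max_S E[f(S)] − Σ √(2(|V|−1) rreg i)`, the max over length-`N`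
sequences of cost-sensitive classifiers. -/
theorem stmt14 {V : Type*} [Fintype V] [Nonempty V] {H : Type*} [Fintype H] [Nonempty H]
    (F : List H → ℝ)  -- F S = E_{environments}[f(induced action sequence of S)]
    (hnonneg : ∀ S, 0 ≤ F S)
    (hmono : ∀ S₁ S₂ : List H, F S₁ ≤ F (S₁ ++ S₂) ∧ F S₂ ≤ F (S₁ ++ S₂))
    (hsub : ∀ (S₁ S₂ : List H) (a : H),
      F (S₁ ++ S₂ ++ [a]) - F (S₁ ++ S₂) ≤ F (S₁ ++ [a]) - F S₁)
    (hempty : F [] = 0)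
    (N : ℕ) (hN : 1 ≤ N) (π : Fin N → H) (rreg : Fin N → ℝ) (hr : ∀ i, 0 ≤ rreg i)
    -- slot `i` is filled with cost-sensitive regret at most `√(2(|V|−1) rreg i)`:
    (hregret : ∀ (i : Fin N) (π' : H),
      F ((List.ofFn π).take i ++ [π']) - F ((List.ofFn π).take i) -
          Real.sqrt (2 * ((Fintype.card V : ℝ) - 1) * rreg i) ≤
        F ((List.ofFn π).take i ++ [π i]) - F ((List.ofFn π).take i))
    (S' : List H) (hS' : S'.length ≤ N) :
    F (List.ofFn π) ≥ (1 - 1 / Real.exp 1) * F S' -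
      ∑ i, Real.sqrt (2 * ((Fintype.card V : ℝ) - 1) * rreg i) :=
  stmt14_general F hnonneg hmono hsub N hN π rreg hregret S' hS'
end
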